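/- arXiv:2405.06852 — 7 statements merged into one kernel-verified Lean document; each statement's English description precedes it below -/
import Mathlib

section
/- Given any Boolean algebra B, let B₊ = B \ {0} with the induced order ≤₊. Then the map φ(b) = {b' ∈ B₊ : b' ≤ b} is a Boolean algebra embedding of B into the complete Boolean algebra RO(B₊, ≤₊) of regular open sets of the poset (B₊, ≤₊), and this embedding preserves all existing joins: if ⋁{aᵢ : i ∈ I} exists in B, then φ(⋁ aᵢ) is the join of {φ(aᵢ)} in RO(B₊, ≤₊). -/
/-- A set `U` in a poset is *regular open* if
`U = {x | ∀ x' ≤ x, ∃ x'' ≤ x', x'' ∈ U}`. -/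
def IsRO {S : Type*} [PartialOrder S] (U : Set S) : Prop :=
  U = {x : S | ∀ x' ≤ x, ∃ x'' ≤ x', x'' ∈ U}

/-- Negation in the regular open algebra of a poset. -/
def roNeg {S : Type*} [PartialOrder S] (U : Set S) : Set S :=
  {x : S | ∀ x' ≤ x, x' ∉ U}

/-- Join in the regular open algebra of a poset. -/
def roSup {S : Type*} [PartialOrder S] (𝒰 : Set (Set S)) : Set S :=
  {x : S | ∀ x' ≤ x, ∃ x'' ≤ x', x'' ∈ ⋃₀ 𝒰}

/-!
In a Boolean algebra, `x ≤ y` iff every nonzero `z ≤ x` meets `y`: otherwise `x \ y` is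
a nonzero element below `x` disjoint from `y`. In the poset `B₊`, "some `x'' ≤ x'` lies
in `φ b`" says exactly that `x'` meets `b`, so this criterion is the regular-openness
of `φ b`. For joins it combines with `z ⊓ ⋁ A = ⊥ ↔ ∀ a ∈ A, z ⊓ a = ⊥`, which holds for
any existing join since `z ⊓ s = ⊥ ↔ s ≤ zᶜ`.
-/

namespace BooleanAlgebra

variable {B : Type*} [BooleanAlgebra B]

theorem le_iff_forall_ne_bot_le_not_disjoint {x y : B} :
    x ≤ y ↔ ∀ z, z ≠ ⊥ → z ≤ x → ¬Disjoint z y := by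
  refine ⟨fun hxy z hz hzx hzy => hz (hzy.eq_bot_of_le (hzx.trans hxy)), fun h => ?_⟩
  by_contra hxy
  exact h (x \ y) (sdiff_eq_bot_iff.not.mpr hxy) sdiff_le disjoint_sdiff_self_left

theorem _root_.IsLUB.disjoint_iff {A : Set B} {s z : B} (hs : IsLUB A s) :
    Disjoint z s ↔ ∀ a ∈ A, Disjoint z a := by
  simp only [disjoint_comm (a := z), ← le_compl_iff_disjoint_right]
  exact isLUB_le_iff hs

def nonzeroBelow (b : B) : Set {b : B // b ≠ ⊥} :=
  {x | (x : B) ≤ b}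

@[simp]
theorem mem_nonzeroBelow {b : B} {x : {b : B // b ≠ ⊥}} :
    x ∈ nonzeroBelow b ↔ (x : B) ≤ b :=
  Iff.rfl

theorem exists_le_mem_nonzeroBelow_iff {x : {b : B // b ≠ ⊥}} {b : B} :
    (∃ y ≤ x, y ∈ nonzeroBelow b) ↔ ¬Disjoint (x : B) b := by
  constructor
  · rintro ⟨y, hyx, hyb⟩ hxb
    exact y.2 ((hxb.mono_left (Subtype.coe_le_coe.mpr hyx)).eq_bot_of_le hyb)
  · intro hxb
    exact ⟨⟨(x : B) ⊓ b, mt disjoint_iff.mpr hxb⟩, inf_le_left, inf_le_right⟩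

theorem coe_le_iff_forall_le_not_disjoint {x : {b : B // b ≠ ⊥}} {b : B} :
    (x : B) ≤ b ↔ ∀ y ≤ x, ¬Disjoint (y : B) b := by
  rw [le_iff_forall_ne_bot_le_not_disjoint]
  exact ⟨fun h y hyx => h y y.2 hyx, fun h z hz hzx => h ⟨z, hz⟩ hzx⟩

theorem isRO_nonzeroBelow (b : B) : IsRO (nonzeroBelow b) := by
  ext x
  simp only [Set.mem_ofPred_eq, exists_le_mem_nonzeroBelow_iff]
  exact coe_le_iff_forall_le_not_disjoint

theorem nonzeroBelow_subset_nonzeroBelow {a b : B} :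
    nonzeroBelow a ⊆ nonzeroBelow b ↔ a ≤ b := by
  refine ⟨fun h => ?_, fun hab x hx => le_trans hx hab⟩
  rw [le_iff_forall_ne_bot_le_not_disjoint]
  intro z hz hza hzb
  exact hz (hzb.eq_bot_of_le (h (show ⟨z, hz⟩ ∈ nonzeroBelow a from hza)))

theorem nonzeroBelow_injective : Function.Injective (nonzeroBelow (B := B)) := fun _ _ h =>
  le_antisymm (nonzeroBelow_subset_nonzeroBelow.mp h.le) (nonzeroBelow_subset_nonzeroBelow.mp h.ge)

theorem nonzeroBelow_inf (a b : B) : nonzeroBelow (a ⊓ b) = nonzeroBelow a ∩ nonzeroBelow b :=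
  Set.ext fun _ => le_inf_iff

theorem nonzeroBelow_compl (a : B) : nonzeroBelow aᶜ = roNeg (nonzeroBelow a) := by
  ext x
  simp only [roNeg, Set.mem_ofPred_eq, mem_nonzeroBelow, coe_le_iff_forall_le_not_disjoint,
    disjoint_compl_right_iff]

theorem nonzeroBelow_bot : nonzeroBelow (⊥ : B) = ∅ :=
  Set.eq_empty_of_forall_notMem fun x hx => x.2 (le_bot_iff.mp hx)

theorem nonzeroBelow_top : nonzeroBelow (⊤ : B) = Set.univ :=
  Set.eq_univ_of_forall fun x => le_top (a := (x : B))

theorem _root_.IsLUB.nonzeroBelow_eq_roSup {A : Set B} {s : B} (hs : IsLUB A s) :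
    nonzeroBelow s = roSup (nonzeroBelow '' A) := by
  ext x
  change _ ↔ ∀ y ≤ x, ∃ z ≤ y, z ∈ ⋃₀ (nonzeroBelow '' A)
  rw [mem_nonzeroBelow, coe_le_iff_forall_le_not_disjoint]
  refine forall₂_congr fun y _ => ?_
  simp only [hs.disjoint_iff, not_forall, ← exists_le_mem_nonzeroBelow_iff, Set.sUnion_image,
    Set.mem_iUnion₂]
  exact ⟨fun ⟨a, ha, z, hzy, hza⟩ => ⟨z, hzy, a, ha, hza⟩,
    fun ⟨z, hzy, a, ha, hza⟩ => ⟨a, ha, z, hzy, hza⟩⟩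

end BooleanAlgebra

open BooleanAlgebra in
/-- For any Boolean algebra `B`, the map `φ b = {b' ∈ B₊ | b' ≤ b}` is a Boolean
embedding of `B` into the regular open algebra of the poset `B₊` of nonzero
elements, preserving all existing joins. -/
theorem embedding_into_regular_opens_of_nonzero_elements {B : Type*} [BooleanAlgebra B] :
    let Bp := {b : B // b ≠ ⊥}
    let φ : B → Set Bp := fun b => {b' : Bp | (b' : B) ≤ b}
    (∀ b : B, IsRO (φ b)) ∧
    Function.Injective φ ∧
    (∀ a b : B, φ (a ⊓ b) = φ a ∩ φ b) ∧
    (∀ a : B, φ aᶜ = roNeg (φ a)) ∧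
    φ ⊥ = ∅ ∧ φ ⊤ = Set.univ ∧
    (∀ (A : Set B) (a : B), IsLUB A a → φ a = roSup (φ '' A)) :=
  ⟨isRO_nonzeroBelow, nonzeroBelow_injective, nonzeroBelow_inf, nonzeroBelow_compl,
    nonzeroBelow_bot, nonzeroBelow_top, fun _ _ hs => hs.nonzeroBelow_eq_roSup⟩
end

section
/- If B is a complete Boolean algebra, then B is isomorphic to the regular open algebra RO(B₊, ≤₊) of the poset of its nonzero elements, via the map b ↦ {b' ∈ B₊ : b' ≤ b}. -/
theorem IsRO.mem_of_le {S : Type*} [PartialOrder S] {U : Set S} (hU : IsRO U) {x y : S}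
    (hy : y ∈ U) (hxy : x ≤ y) : x ∈ U := by
  rw [hU] at hy ⊢
  exact fun x' hx' => hy x' (hx'.trans hxy)

section BooleanAlgebra

variable {B : Type*} [BooleanAlgebra B]

theorem le_of_forall_le_ne_bot_not_disjoint {a b : B}
    (h : ∀ c ≤ a, c ≠ ⊥ → ¬Disjoint c b) : a ≤ b := by
  by_contra hab
  exact h (a \ b) sdiff_le (mt sdiff_eq_bot_iff.mp hab) disjoint_sdiff_self_left

theorem isRO_setOf_coe_le (b : B) : IsRO {x : {b : B // b ≠ ⊥} | (x : B) ≤ b} := by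
  refine Set.ext fun x =>
    ⟨fun hx x' hx' => ⟨x', le_rfl, (Subtype.coe_le_coe.2 hx').trans hx⟩, fun hx => ?_⟩
  refine le_of_forall_le_ne_bot_not_disjoint fun c hcx hc hcb => ?_
  obtain ⟨x'', hx''c, hx''b⟩ := hx ⟨c, hc⟩ hcx
  exact x''.2 ((hcb.mono_left (Subtype.coe_le_coe.2 hx''c)).eq_bot_of_le hx''b)

theorem setOf_coe_le_subset_setOf_coe_le_iff {a b : B} :
    {x : {b : B // b ≠ ⊥} | (x : B) ≤ a} ⊆ {x | (x : B) ≤ b} ↔ a ≤ b := by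
  refine ⟨fun h => le_of_forall_le_ne_bot_not_disjoint fun c hca hc hcb => ?_,
    fun h x hx => le_trans hx h⟩
  exact hc (hcb.eq_bot_of_le (h (show (⟨c, hc⟩ : {b : B // b ≠ ⊥}) ∈ _ from hca)))

end BooleanAlgebra

theorem IsRO.setOf_coe_le_sSup_eq {B : Type*} [Order.Frame B] {U : Set {b : B // b ≠ ⊥}}
    (hU : IsRO U) : {x : {b : B // b ≠ ⊥} | (x : B) ≤ sSup ((↑) '' U)} = U := by
  refine Set.Subset.antisymm (fun x hx => ?_) fun x hx => le_sSup ⟨x, hx, rfl⟩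
  rw [hU]
  intro x' hx'
  by_contra! hnone
  have hdisj : Disjoint (x' : B) (sSup ((↑) '' U)) := by
    refine disjoint_sSup_iff.mpr ?_
    rintro _ ⟨u, hu, rfl⟩
    by_contra hmeet
    exact hnone ⟨_, hmeet ∘ disjoint_iff.mpr⟩ inf_le_left (hU.mem_of_le hu inf_le_right)
  exact x'.2 (hdisj.eq_bot_of_le ((Subtype.coe_le_coe.2 hx').trans hx))

/-- A complete Boolean algebra `B` is isomorphic to the regular open algebra of
the poset `B₊` of its nonzero elements, via `b ↦ {b' ∈ B₊ | b' ≤ b}`. -/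
theorem complete_boolean_algebra_iso_regular_opens {B : Type*} [CompleteBooleanAlgebra B] :
    ∃ e : B ≃o {U : Set {b : B // b ≠ ⊥} // IsRO U},
      ∀ b : B, ((e b : {U : Set {b : B // b ≠ ⊥} // IsRO U}) : Set {b : B // b ≠ ⊥}) =
        {b' : {b : B // b ≠ ⊥} | (b' : B) ≤ b} := by
  let f : B ↪o {U : Set {b : B // b ≠ ⊥} // IsRO U} :=
    OrderEmbedding.ofMapLEIff (fun b => ⟨_, isRO_setOf_coe_le b⟩)
      fun _ _ => setOf_coe_le_subset_setOf_coe_le_iff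
  have hf : Function.Surjective f := fun U =>
    ⟨sSup (Subtype.val '' U.1), Subtype.ext U.2.setOf_coe_le_sSup_eq⟩
  exact ⟨OrderIso.ofSurjective f hf, fun _ => rfl⟩
end

section
/- If (S,⊑) is a separative poset and U is a regular open subset of (S,⊑), then the restriction of (S,⊑) to U is again a separative poset. -/
namespace IsRO

variable {S : Type*} [PartialOrder S] {U V : Set S}

theorem exists_le_mem (hU : IsRO U) {x x' : S} (hx : x ∈ U) (hx' : x' ≤ x) :
    ∃ x'' ≤ x', x'' ∈ U := by
  rw [hU] at hx
  exact hx x' hx'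

theorem isLowerSet (hU : IsRO U) : IsLowerSet U := by
  intro x y hyx hx
  rw [hU]
  exact fun y' hy' => hU.exists_le_mem hx (hy'.trans hyx)

theorem preimage_val (hU : IsRO U) (hV : IsRO V) : IsRO (Subtype.val ⁻¹' V : Set U) := by
  ext y
  constructor
  · intro hy y' hy'
    exact ⟨y', le_rfl, hV.isLowerSet hy' hy⟩
  · intro hdense
    show (y : S) ∈ V
    rw [hV]
    intro s hs
    obtain ⟨u, hus, huU⟩ := hU.exists_le_mem y.2 hs
    obtain ⟨w, hwu, hwV⟩ := hdense ⟨u, huU⟩ (hus.trans hs)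
    exact ⟨w, (show (w : S) ≤ u from hwu).trans hus, hwV⟩

end IsRO

/-- The restriction of a separative poset to a regular open subset is again a
separative poset (with the induced order). -/
theorem restriction_of_separative_to_regular_open_is_separative
    {S : Type*} [PartialOrder S]
    (hsep : ∀ x : S, IsRO {y : S | y ≤ x})
    (U : Set S) (hU : IsRO U) :
    ∀ x : U, IsRO {y : U | y ≤ x} :=
  fun x => hU.preimage_val (hsep x)
end

section
/- Let F = (S,⊑,P) be a possibility frame satisfying the filter realization condition. Then P is compact in the following sense: for any family {Uᵢ : i ∈ I} ⊆ P with S = ⋁{Uᵢ : i ∈ I} (join in the regular open algebra), there is a finite I₀ ⊆ I with S = ⋁{Uᵢ : i ∈ I₀}. -/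
section RegularOpen

variable {S : Type*} [PartialOrder S]

theorem notMem_roNeg_of_mem {U : Set S} {x : S} (hx : x ∈ U) : x ∉ roNeg U :=
  fun h ↦ h x le_rfl hx

theorem inter_roNeg_self (U : Set S) : U ∩ roNeg U = ∅ :=
  Set.eq_empty_iff_forall_notMem.2 fun _ hx ↦ notMem_roNeg_of_mem hx.1 hx.2

@[simp]
theorem roNeg_empty : roNeg (∅ : Set S) = Set.univ := by
  ext x
  simp [roNeg]

theorem roSup_eq_roNeg_biInter_roNeg (𝒰 : Set (Set S)) :
    roSup 𝒰 = roNeg (⋂ V ∈ 𝒰, roNeg V) := by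
  ext x
  simp only [roSup, roNeg, Set.mem_ofPred_eq, Set.mem_sUnion, Set.mem_iInter, not_forall,
    not_not]
  exact forall₂_congr fun _ _ ↦
    ⟨fun ⟨x'', hle, V, hV, hx''⟩ ↦ ⟨V, hV, x'', hle, hx''⟩,
      fun ⟨V, hV, x'', hle, hx''⟩ ↦ ⟨x'', hle, V, hV, hx''⟩⟩

theorem univ_mem_of_roNeg_mem {P : Set (Set S)} (hne : P.Nonempty)
    (hneg : ∀ U ∈ P, roNeg U ∈ P) (hinter : ∀ U ∈ P, ∀ V ∈ P, U ∩ V ∈ P) :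
    Set.univ ∈ P := by
  obtain ⟨U, hU⟩ := hne
  have hempty : (∅ : Set S) ∈ P := inter_roNeg_self U ▸ hinter U hU _ (hneg U hU)
  simpa using hneg ∅ hempty

end RegularOpen

section FilterRealization

variable {S : Type*}

def HasFilterRealization (P : Set (Set S)) : Prop :=
  ∀ F ⊆ P, F.Nonempty →
    (∀ U ∈ F, ∀ V ∈ F, U ∩ V ∈ F) →
    (∀ U ∈ F, ∀ V ∈ P, U ⊆ V → V ∈ F) →
    ∅ ∉ F → ∃ x : S, F = {U ∈ P | x ∈ U}

theorem HasFilterRealization.exists_mem_iInter {P : Set (Set S)} (hfr : HasFilterRealization P)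
    (huniv : Set.univ ∈ P) (hinter : ∀ U ∈ P, ∀ V ∈ P, U ∩ V ∈ P)
    {I : Type*} (W : I → Set S) (hW : ∀ i, W i ∈ P)
    (hfip : ∀ t : Finset I, (⋂ i ∈ t, W i).Nonempty) :
    ∃ x, ∀ i, x ∈ W i := by
  classical
  let F : Set (Set S) := {V ∈ P | ∃ t : Finset I, ⋂ i ∈ t, W i ⊆ V}
  have hF_inter : ∀ U ∈ F, ∀ V ∈ F, U ∩ V ∈ F := by
    rintro U ⟨hUP, t₁, ht₁⟩ V ⟨hVP, t₂, ht₂⟩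
    refine ⟨hinter U hUP V hVP, t₁ ∪ t₂, ?_⟩
    rw [Finset.set_biInter_inter]
    exact Set.inter_subset_inter ht₁ ht₂
  have hF_mono : ∀ U ∈ F, ∀ V ∈ P, U ⊆ V → V ∈ F := by
    rintro U ⟨-, t, ht⟩ V hVP hUV
    exact ⟨hVP, t, ht.trans hUV⟩
  have hF_proper : ∅ ∉ F := by
    rintro ⟨-, t, ht⟩
    exact (hfip t).ne_empty (Set.subset_empty_iff.1 ht)
  obtain ⟨x, hx⟩ := hfr F (fun _ hV ↦ hV.1) ⟨Set.univ, huniv, ∅, Set.subset_univ _⟩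
    hF_inter hF_mono hF_proper
  refine ⟨x, fun i ↦ ?_⟩
  have hWi : W i ∈ F := ⟨hW i, {i}, (Finset.set_biInter_singleton i W).subset⟩
  exact (hx ▸ hWi).2

end FilterRealization

theorem filter_realization_implies_compactness_general {S : Type*} [PartialOrder S]
    (P : Set (Set S)) (hne : P.Nonempty)
    (hneg : ∀ U ∈ P, roNeg U ∈ P)
    (hinter : ∀ U ∈ P, ∀ V ∈ P, U ∩ V ∈ P)
    (hfr : ∀ F ⊆ P, F.Nonempty →
      (∀ U ∈ F, ∀ V ∈ F, U ∩ V ∈ F) →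
      (∀ U ∈ F, ∀ V ∈ P, U ⊆ V → V ∈ F) →
      ∅ ∉ F → ∃ x : S, F = {U ∈ P | x ∈ U})
    {I : Type*} (U : I → Set S) (hU : ∀ i, U i ∈ P)
    (hcov : roSup (Set.range U) = Set.univ) :
    ∃ t : Finset I, roSup (U '' ↑t) = Set.univ := by
  by_contra! hno_finite
  have hfip : ∀ t : Finset I, (⋂ i ∈ t, roNeg (U i)).Nonempty := by
    intro t
    by_contra hempty
    apply hno_finite t
    rw [roSup_eq_roNeg_biInter_roNeg, Set.biInter_image, Finset.set_biInter_coe,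
      Set.not_nonempty_iff_eq_empty.1 hempty, roNeg_empty]
  obtain ⟨x, hx⟩ := HasFilterRealization.exists_mem_iInter hfr
    (univ_mem_of_roNeg_mem hne hneg hinter) hinter (fun i ↦ roNeg (U i)) (fun i ↦ hneg _ (hU i))
    hfip
  have hx_cov : x ∈ roSup (Set.range U) := hcov ▸ Set.mem_univ x
  rw [roSup_eq_roNeg_biInter_roNeg, Set.biInter_range] at hx_cov
  exact notMem_roNeg_of_mem (Set.mem_iInter.2 hx) hx_cov

/-- In a possibility frame `(S,⊑,P)` satisfying the filter realization
condition, `P` is compact: a cover of `S` by a join of admissible sets has a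
finite subcover (join). -/
theorem filter_realization_implies_compactness {S : Type*} [PartialOrder S]
    (P : Set (Set S)) (hne : P.Nonempty)
    (hro : ∀ U ∈ P, IsRO U)
    (hneg : ∀ U ∈ P, roNeg U ∈ P)
    (hinter : ∀ U ∈ P, ∀ V ∈ P, U ∩ V ∈ P)
    (hfr : ∀ F ⊆ P, F.Nonempty →
      (∀ U ∈ F, ∀ V ∈ F, U ∩ V ∈ F) →
      (∀ U ∈ F, ∀ V ∈ P, U ⊆ V → V ∈ F) →
      ∅ ∉ F → ∃ x : S, F = {U ∈ P | x ∈ U})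
    {I : Type*} (U : I → Set S) (hU : ∀ i, U i ∈ P)
    (hcov : roSup (Set.range U) = Set.univ) :
    ∃ t : Finset I, roSup (U '' ↑t) = Set.univ :=
  filter_realization_implies_compactness_general P hne hneg hinter hfr U hU hcov
end

section
/- Let (S,⊑) be a poset and R a binary relation on S satisfying: up-R (if x' ⊑ x and x'Ry' then xRy'), R-down (if xRy and y' ⊑ y then xRy'), and R-refinability (if xRy then ∃x' ⊑ x such that ∀x'' ⊑ x', ∃y' ⊑ y with x''Ry'). Then for every regular open set Z of (S,⊑), the set □Z = {x ∈ S : R(x) ⊆ Z} is regular open. -/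
section

variable {S : Type*} [PartialOrder S]

/-- Interior of the closure in the Alexandrov topology whose open sets are the lower sets. -/
def interiorClosure (U : Set S) : Set S :=
  {x | ∀ x' ≤ x, ∃ x'' ≤ x', x'' ∈ U}

def box (R : S → S → Prop) (Z : Set S) : Set S :=
  {x | ∀ y, R x y → y ∈ Z}

lemma IsLowerSet.subset_interiorClosure {U : Set S} (hU : IsLowerSet U) :
    U ⊆ interiorClosure U :=
  fun _ hx x' hx' => ⟨x', le_rfl, hU hx' hx⟩

lemma isRO_of_isLowerSet {U : Set S} (hU : IsLowerSet U) (h : interiorClosure U ⊆ U) :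
    IsRO U :=
  hU.subset_interiorClosure.antisymm h

variable {R : S → S → Prop}

lemma isLowerSet_box (hup : ∀ x x' y', x' ≤ x → R x' y' → R x y') (Z : Set S) :
    IsLowerSet (box R Z) :=
  fun x x' hx' hx y hy => hx y (hup x x' y hx' hy)

lemma interiorClosure_box_subset (hdown : ∀ x y y', R x y → y' ≤ y → R x y')
    (href : ∀ x y, R x y → ∃ x' ≤ x, ∀ x'' ≤ x', ∃ y' ≤ y, R x'' y')
    {Z : Set S} (hZ : IsRO Z) : interiorClosure (box R Z) ⊆ box R Z := by
  intro x hx y hxy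
  rw [hZ]
  intro y' hy'
  obtain ⟨x₁, hx₁, hsees⟩ := href x y' (hdown x y y' hxy hy')
  obtain ⟨x₂, hx₂, hx₂Z⟩ := hx x₁ hx₁
  obtain ⟨y'', hy'', hR⟩ := hsees x₂ hx₂
  exact ⟨y'', hy'', hx₂Z y'' hR⟩

end

/-- If a relation `R` on a poset satisfies up-R, R-down, and R-refinability,
then `□Z = {x | R(x) ⊆ Z}` is regular open for every regular open `Z`. -/
theorem box_preserves_regular_open {S : Type*} [PartialOrder S]
    (R : S → S → Prop)
    (hup : ∀ x x' y', x' ≤ x → R x' y' → R x y')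
    (hdown : ∀ x y y', R x y → y' ≤ y → R x y')
    (href : ∀ x y, R x y → ∃ x' ≤ x, ∀ x'' ≤ x', ∃ y' ≤ y, R x'' y') :
    ∀ Z : Set S, IsRO Z → IsRO {x : S | ∀ y, R x y → y ∈ Z} :=
  fun Z hZ => isRO_of_isLowerSet (isLowerSet_box hup Z) (interiorClosure_box_subset hdown href hZ)
end

section
/- Let (S,⊑) be a poset with neighborhood function N : S → ℘(RO(S,⊑)). Then the regular open sets are closed under the operation □_N U = {x ∈ S : U ∈ N(x)} (for all U ∈ RO(S,⊑)) if and only if N satisfies N-persistence (if x' ⊑ x then N(x) ⊆ N(x')) and N-refinability (if U ∉ N(x), then ∃x' ⊑ x such that ∀x'' ⊑ x', U ∉ N(x'')). -/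
theorem isRO_iff {S : Type*} [PartialOrder S] {U : Set S} :
    IsRO U ↔ IsLowerSet U ∧ ∀ x ∉ U, ∃ x' ≤ x, ∀ x'' ≤ x', x'' ∉ U := by
  constructor
  · intro hU
    refine ⟨fun x y hyx hx => ?_, fun x hx => ?_⟩
    · rw [hU] at hx ⊢
      exact fun z hzy => hx z (hzy.trans hyx)
    · by_contra! hdense
      exact hx (hU ▸ hdense)
  · rintro ⟨hlower, hrefine⟩
    ext x
    refine ⟨fun hx x' hx' => ⟨x', le_rfl, hlower hx' hx⟩, fun hdense => ?_⟩
    by_contra hx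
    obtain ⟨x', hx', hout⟩ := hrefine x hx
    obtain ⟨x'', hx'', hin⟩ := hdense x' hx'
    exact hout x'' hx'' hin

/-- For a neighborhood function `N` on a poset whose values are sets of regular
open sets, the regular open sets are closed under
`□_N U = {x | U ∈ N x}` iff `N` satisfies N-persistence and N-refinability. -/
theorem neighborhood_box_closure_iff {S : Type*} [PartialOrder S]
    (N : S → Set (Set S)) (hN : ∀ x : S, ∀ U ∈ N x, IsRO U) :
    (∀ U : Set S, IsRO U → IsRO {x : S | U ∈ N x}) ↔
      ((∀ x x' : S, x' ≤ x → N x ⊆ N x') ∧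
        (∀ (x : S) (U : Set S), IsRO U → U ∉ N x →
          ∃ x' ≤ x, ∀ x'' ≤ x', U ∉ N x'')) := by
  constructor
  · intro hclosed
    refine ⟨fun x x' hle U hU => ?_, fun x U hU hx => ?_⟩
    · exact (isRO_iff.1 (hclosed U (hN x U hU))).1 hle hU
    · exact (isRO_iff.1 (hclosed U hU)).2 x hx
  · rintro ⟨hpersist, hrefine⟩ U hU
    exact isRO_iff.2 ⟨fun x x' hle hx => hpersist x x' hle hx, fun x hx => hrefine x U hU hx⟩
end

section
/- Let (B, {□ᵢ}) be a complete Boolean algebra with operators □ᵢ distributing over all meets, and define on B₊ = B \ {0} the relations xRᵢy iff for all y' ≤₊ y, x ∧ ◇ᵢy' ≠ 0, where ◇ᵢa = ¬□ᵢ¬a. Then each Rᵢ satisfies up-R, R-down, R-refinability, and R-dense with respect to the order ≤₊ on B₊. -/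
/-!
Only refinability needs more than monotonicity of `□`. Take `x' = x ⊓ ◇y`. If some `x'' ≤ x'`
were related to no `y' ≤ y`, the elements `z` with `x'' ⊓ ◇z = ⊥` would be dense below `y`, so
`y` would lie below their join. As `◇` preserves all joins, this gives `x'' ⊓ ◇y = ⊥`,
contradicting `⊥ < x'' ≤ ◇y`.
-/

/-- The relation `x R y` iff for all nonzero `y' ≤ y`, `x ⊓ ◇y' ≠ ⊥`, where
`◇a = ¬□¬a`, defined on the nonzero elements of a Boolean algebra. -/
def accRel {B : Type*} [BooleanAlgebra B] (box : B → B)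
    (x y : {b : B // b ≠ ⊥}) : Prop :=
  ∀ y' : {b : B // b ≠ ⊥}, y' ≤ y → (x : B) ⊓ (box ((y' : B)ᶜ))ᶜ ≠ ⊥

section CompleteLattice

variable {α β : Type*} [CompleteLattice α] [CompleteLattice β] {f : α → β}

theorem monotone_of_map_sInf (hf : ∀ A : Set α, f (sInf A) = ⨅ a ∈ A, f a) : Monotone f :=
  OrderHomClass.mono (⟨f, fun A => (hf A).trans sInf_image.symm⟩ : sInfHom α β)

end CompleteLattice

section BooleanAlgebra

variable {α β : Type*}

theorem Monotone.compl_comp_compl [BooleanAlgebra α] [BooleanAlgebra β] {f : α → β}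
    (hf : Monotone f) : Monotone fun a => (f aᶜ)ᶜ :=
  fun _ _ h => compl_le_compl (hf (compl_le_compl h))

theorem compl_map_compl_sSup [CompleteBooleanAlgebra α] [CompleteBooleanAlgebra β] {f : α → β}
    (hf : ∀ A : Set α, f (sInf A) = ⨅ a ∈ A, f a) (D : Set α) :
    (f (sSup D)ᶜ)ᶜ = ⨆ z ∈ D, (f zᶜ)ᶜ := by
  simp only [compl_sSup', hf, iInf_image, compl_iInf]

theorem le_sSup_of_forall_exists_le [CompleteBooleanAlgebra α] {y : α} {D : Set α}
    (h : ∀ z ≠ ⊥, z ≤ y → ∃ w ∈ D, w ≠ ⊥ ∧ w ≤ z) : y ≤ sSup D := by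
  by_contra hy
  obtain ⟨w, hwD, hw, hwy⟩ := h (y \ sSup D) (sdiff_eq_bot_iff.not.mpr hy) sdiff_le
  exact hw (disjoint_sdiff_self_left.mono_left hwy |>.eq_bot_of_le (le_sSup hwD))

end BooleanAlgebra

namespace accRel

variable {B : Type*} {box : B → B}

section BooleanAlgebra

variable [BooleanAlgebra B] {x x' y y' : {b : B // b ≠ ⊥}}

theorem mono_left (hx : x' ≤ x) (h : accRel box x' y) : accRel box x y :=
  fun y' hy' hbot => h y' hy' (le_bot_iff.mp ((inf_le_inf_right _ hx).trans hbot.le))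

theorem mono_right (h : accRel box x y) (hy : y' ≤ y) : accRel box x y' :=
  fun y'' hy'' => h y'' (hy''.trans hy)

theorem of_forall_exists_le (hbox : Monotone box)
    (h : ∀ y' ≤ y, ∃ y'' ≤ y', accRel box x y'') : accRel box x y := by
  intro y' hy' hbot
  obtain ⟨y'', hy'', hR⟩ := h y' hy'
  exact hR y'' le_rfl
    (le_bot_iff.mp ((inf_le_inf_left _ (hbox.compl_comp_compl hy'')).trans hbot.le))

end BooleanAlgebra

theorem exists_refinement [CompleteBooleanAlgebra B]
    (hbox : ∀ A : Set B, box (sInf A) = ⨅ a ∈ A, box a) {x y : {b : B // b ≠ ⊥}}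
    (h : accRel box x y) : ∃ x' ≤ x, ∀ x'' ≤ x', ∃ y' ≤ y, accRel box x'' y' := by
  refine ⟨⟨x ⊓ (box (y : B)ᶜ)ᶜ, h y le_rfl⟩, inf_le_left, fun x'' hx'' => ?_⟩
  by_contra! hx''y
  set D : Set B := {z | (x'' : B) ⊓ (box zᶜ)ᶜ = ⊥}
  have hyD : (y : B) ≤ sSup D := le_sSup_of_forall_exists_le fun z hz hzy => by
    obtain ⟨w, hwz, hw⟩ := not_forall₂.mp (hx''y ⟨z, hz⟩ hzy)
    exact ⟨w, not_not.mp hw, w.2, hwz⟩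
  have hx''D : (x'' : B) ≤ (box (sSup D)ᶜ)ᶜ :=
    (show (x'' : B) ≤ _ from hx'').trans <|
      inf_le_right.trans ((monotone_of_map_sInf hbox).compl_comp_compl hyD)
  apply x''.2
  rw [← inf_eq_left.mpr hx''D, compl_map_compl_sSup hbox, inf_iSup₂_eq]
  exact iSup₂_eq_bot.mpr fun _ hz => hz

end accRel

/-- For a complete Boolean algebra with operators `□ᵢ` distributing over all
meets, the relations `Rᵢ` on the poset of nonzero elements satisfy up-R,
R-down, R-refinability, and R-dense. -/
theorem accRel_conditions {B : Type*} [CompleteBooleanAlgebra B]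
    {I : Type*} (box : I → B → B)
    (hbox : ∀ (i : I) (A : Set B), box i (sInf A) = ⨅ a ∈ A, box i a) :
    ∀ i : I,
      (∀ x x' y' : {b : B // b ≠ ⊥}, x' ≤ x → accRel (box i) x' y' → accRel (box i) x y') ∧
      (∀ x y y' : {b : B // b ≠ ⊥}, accRel (box i) x y → y' ≤ y → accRel (box i) x y') ∧
      (∀ x y : {b : B // b ≠ ⊥}, accRel (box i) x y →
        ∃ x' ≤ x, ∀ x'' ≤ x', ∃ y' ≤ y, accRel (box i) x'' y') ∧
      (∀ x y : {b : B // b ≠ ⊥},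
        (∀ y' ≤ y, ∃ y'' ≤ y', accRel (box i) x y'') → accRel (box i) x y) := fun i =>
  ⟨fun _ _ _ hx h => h.mono_left hx, fun _ _ _ h hy => h.mono_right hy,
    fun _ _ h => h.exists_refinement (hbox i),
    fun _ _ h => accRel.of_forall_exists_le (monotone_of_map_sInf (hbox i)) h⟩
end
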